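/- With W as in Theorem 8 (W = Π_↑(R_πV(E−H₀)^{-1}VR_π − V(−E−H₀)^{-1}V)Π_↑ in the z-product basis), write W = W_diag + W_offdiag. If every energy denominator satisfies |E + E↓₀,z ± ħ²A_j/2| ≥ D₀ > 0, then ‖W‖₂ ≤ (ħ⁴/(4D₀))·A_{2,max} + (ħ⁶/(4D₀²))·A_{2,max}·A_max, where A_{2,max} = Σ_j A_j² and A_max = Σ_j A_j; the diagonal part contributes at most the first term and the off-diagonal part (after the spin-echo cancellation) at most the second term, via the bound ‖X‖₂² ≤ ‖X‖₁‖X‖_∞ applied to the matrix of W_offdiag whose (z',z) entry has modulus at most ħ⁶A_jA_k(A_j+A_k)/(8D₀²) for the unique flipped pair (j,k). -/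
import Mathlib


open Finset


lemma schur_bound {I : Type*} [Fintype I] [DecidableEq I] (M : Matrix I I ℝ) (B : ℝ)
    (hB : 0 ≤ B)
    (hrow : ∀ z', ∑ z, |M z' z| ≤ B)
    (hcol : ∀ z, ∑ z', |M z' z| ≤ B) (x : I → ℝ) :
    Real.sqrt (∑ z', (M.mulVec x z') ^ 2) ≤ B * Real.sqrt (∑ z, x z ^ 2) := by
  have key : ∑ z', (M.mulVec x z') ^ 2 ≤ B ^ 2 * ∑ z, x z ^ 2 := by
    have h1 : ∀ z', (M.mulVec x z') ^ 2 ≤ B * ∑ z, |M z' z| * x z ^ 2 := by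
      intro z'
      have hcs := Finset.sum_mul_sq_le_sq_mul_sq Finset.univ
        (fun z => Real.sqrt |M z' z|) (fun z => Real.sqrt |M z' z| * |x z|)
      calc (M.mulVec x z') ^ 2 ≤ (∑ z, |M z' z * x z|) ^ 2 := by
            rw [← sq_abs]
            apply pow_le_pow_left₀ (abs_nonneg _)
            exact Finset.abs_sum_le_sum_abs _ _
        _ = (∑ z, Real.sqrt |M z' z| * (Real.sqrt |M z' z| * |x z|)) ^ 2 := by
            apply congrArg (· ^ 2)
            apply Finset.sum_congr rfl
            intro z _
            rw [← mul_assoc, Real.mul_self_sqrt (abs_nonneg _), abs_mul]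
        _ ≤ (∑ z, (Real.sqrt |M z' z|) ^ 2) * (∑ z, (Real.sqrt |M z' z| * |x z|) ^ 2) := hcs
        _ = (∑ z, |M z' z|) * (∑ z, |M z' z| * x z ^ 2) := by
            congr 1
            · exact Finset.sum_congr rfl fun z _ => Real.sq_sqrt (abs_nonneg _)
            · exact Finset.sum_congr rfl fun z _ => by
                rw [mul_pow, Real.sq_sqrt (abs_nonneg _), sq_abs]
        _ ≤ B * ∑ z, |M z' z| * x z ^ 2 := by
            apply mul_le_mul_of_nonneg_right (hrow z')
            exact Finset.sum_nonneg fun z _ => mul_nonneg (abs_nonneg _) (sq_nonneg _)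
    calc ∑ z', (M.mulVec x z') ^ 2 ≤ ∑ z', B * ∑ z, |M z' z| * x z ^ 2 :=
          Finset.sum_le_sum fun z' _ => h1 z'
      _ = B * ∑ z, (∑ z', |M z' z|) * x z ^ 2 := by
          rw [← Finset.mul_sum, Finset.sum_comm]
          congr 1
          exact Finset.sum_congr rfl fun z _ => by rw [Finset.sum_mul]
      _ ≤ B * ∑ z, B * x z ^ 2 := by
          apply mul_le_mul_of_nonneg_left _ hB
          exact Finset.sum_le_sum fun z _ =>
            mul_le_mul_of_nonneg_right (hcol z) (sq_nonneg _)
      _ = B ^ 2 * ∑ z, x z ^ 2 := by rw [← Finset.mul_sum]; ring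
  calc Real.sqrt (∑ z', (M.mulVec x z') ^ 2) ≤ Real.sqrt (B ^ 2 * ∑ z, x z ^ 2) :=
        Real.sqrt_le_sqrt key
    _ = B * Real.sqrt (∑ z, x z ^ 2) := by
        rw [Real.sqrt_mul (sq_nonneg B), Real.sqrt_sq hB]



section
variable (N : ℕ) (hbar : ℝ) (A : Fin N → ℝ) (E : ℝ) (Ez : (Fin N → Bool) → ℝ)

-- uniqueness of the source configuration given the target and the pair (j,k)
lemma flipflop_uniq (z' z : Fin N → Bool) (j k : Fin N)
    (hj : z j = false) (hk : z k = true) (hjk : j ≠ k)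
    (hz' : z' = Function.update (Function.update z j true) k false) :
    z = Function.update (Function.update z' j false) k true := by
  funext i
  rcases eq_or_ne i k with rfl | hik
  · rw [Function.update_self]; exact hk
  · rw [Function.update_of_ne hik]
    rcases eq_or_ne i j with rfl | hij
    · rw [Function.update_self]; exact hj
    · rw [Function.update_of_ne hij, hz', Function.update_of_ne hik,
        Function.update_of_ne hij]
end

-- entry bound for the off-diagonal part
lemma offentry_bound (hbar : ℝ) (Aj Ak : ℝ) (hAj : 0 ≤ Aj) (hAk : 0 ≤ Ak)
    (D₀ a b : ℝ) (hD₀ : 0 < D₀) (ha : D₀ ≤ |a|) (hb : D₀ ≤ |b|)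
    (hab : b - a = hbar ^ 2 * (Aj - Ak) / 2) :
    |hbar ^ 4 * Aj * Ak / 4 * (1 / a - 1 / b)| ≤
      hbar ^ 6 / (8 * D₀ ^ 2) * (Aj * Ak * (Aj + Ak)) := by
  have ha0 : a ≠ 0 := by
    intro h; rw [h, abs_zero] at ha; linarith
  have hb0 : b ≠ 0 := by
    intro h; rw [h, abs_zero] at hb; linarith
  have hdiff : 1 / a - 1 / b = (b - a) / (a * b) := by
    field_simp
  have hnum : |b - a| ≤ hbar ^ 2 * (Aj + Ak) / 2 := by
    rw [hab, abs_div, abs_mul, abs_of_nonneg (by positivity : (0:ℝ) ≤ hbar ^ 2)]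
    have : |Aj - Ak| ≤ Aj + Ak := by
      rw [abs_sub_le_iff]; constructor <;> linarith
    calc hbar ^ 2 * |Aj - Ak| / |2| = hbar ^ 2 * |Aj - Ak| / 2 := by norm_num
      _ ≤ hbar ^ 2 * (Aj + Ak) / 2 := by
          apply div_le_div_of_nonneg_right _ (by norm_num)
          exact mul_le_mul_of_nonneg_left this (by positivity)
  have hdiffle : |1 / a - 1 / b| ≤ (hbar ^ 2 * (Aj + Ak) / 2) / D₀ ^ 2 := by
    rw [hdiff, abs_div, abs_mul]
    apply div_le_div₀ (by positivity) hnum (by positivity)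
    calc D₀ ^ 2 = D₀ * D₀ := sq D₀ ▸ (sq D₀).symm ▸ (by ring)
      _ ≤ |a| * |b| := mul_le_mul ha hb (le_of_lt hD₀) (abs_nonneg _)
  calc |hbar ^ 4 * Aj * Ak / 4 * (1 / a - 1 / b)|
      = hbar ^ 4 * Aj * Ak / 4 * |1 / a - 1 / b| := by
        rw [abs_mul, abs_of_nonneg (by positivity : (0:ℝ) ≤ hbar ^ 4 * Aj * Ak / 4)]
    _ ≤ hbar ^ 4 * Aj * Ak / 4 * ((hbar ^ 2 * (Aj + Ak) / 2) / D₀ ^ 2) :=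
        mul_le_mul_of_nonneg_left hdiffle (by positivity)
    _ = hbar ^ 6 / (8 * D₀ ^ 2) * (Aj * Ak * (Aj + Ak)) := by
        field_simp; ring


/-- Diagonal part of the spin-echo effective operator `W`, in the
`z`-product basis (`false` = down).  `Ez z` is the unperturbed spin-down
energy `E↓₀,z`. -/
noncomputable def Wdiag (N : ℕ) (hbar : ℝ) (A : Fin N → ℝ) (E : ℝ)
    (Ez : (Fin N → Bool) → ℝ) :
    Matrix (Fin N → Bool) (Fin N → Bool) ℝ := fun z' z =>
  if z' = z then
    (∑ j ∈ Finset.univ.filter (fun j => z j = false),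
        hbar ^ 4 * A j ^ 2 / (4 * (E + Ez z + hbar ^ 2 * A j / 2)))
    - (∑ k ∈ Finset.univ.filter (fun k => z k = true),
        hbar ^ 4 * A k ^ 2 / (4 * (E + Ez z + hbar ^ 2 * A k / 2)))
  else 0

/-- Off-diagonal part of `W`: it connects configurations differing by one
flip-flop pair `(j,k)`, with entry `(hbar⁴A_jA_k/4)` times a difference of two
nearly-equal resolvent denominators (the spin-echo cancellation). -/
noncomputable def Woff (N : ℕ) (hbar : ℝ) (A : Fin N → ℝ) (E : ℝ)
    (Ez : (Fin N → Bool) → ℝ) :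
    Matrix (Fin N → Bool) (Fin N → Bool) ℝ := fun z' z =>
  ∑ j, ∑ k,
    if z j = false ∧ z k = true ∧ j ≠ k ∧
        z' = Function.update (Function.update z j true) k false then
      hbar ^ 4 * A j * A k / 4 *
        (1 / (E + Ez z + hbar ^ 2 * A k / 2) - 1 / (E + Ez z + hbar ^ 2 * A j / 2))
    else 0

/-- spectral-norm bound for `W = W_diag + W_offdiag`.  If every
energy denominator is at least `D₀` in absolute value, then (expressed via the
defining property of the spectral norm, for every vector `x`) the diagonal
part contributes at most `(hbar⁴/(4D₀))A_{2,max}`, the off-diagonal part at most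
`(hbar⁶/(4D₀²))A_{2,max}A_max`, and hence
`‖W‖₂ ≤ (hbar⁴/(4D₀))A_{2,max} + (hbar⁶/(4D₀²))A_{2,max}A_max`, where
`A_{2,max} = Σ_j A_j²` and `A_max = Σ_j A_j`. -/
theorem echo_operator_norm_bound
    (N : ℕ) (hbar : ℝ) (A : Fin N → ℝ) (hA : ∀ j, 0 ≤ A j)
    (E D₀ : ℝ) (Ez : (Fin N → Bool) → ℝ) (hD₀ : 0 < D₀)
    (hden : ∀ (z : Fin N → Bool) (j : Fin N),
      D₀ ≤ |E + Ez z + hbar ^ 2 * A j / 2| ∧ D₀ ≤ |E + Ez z - hbar ^ 2 * A j / 2|)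
    (x : (Fin N → Bool) → ℝ) :
    Real.sqrt (∑ z', ((Wdiag N hbar A E Ez).mulVec x z') ^ 2) ≤
        hbar ^ 4 / (4 * D₀) * (∑ j, A j ^ 2) *
          Real.sqrt (∑ z, x z ^ 2) ∧
    Real.sqrt (∑ z', ((Woff N hbar A E Ez).mulVec x z') ^ 2) ≤
        hbar ^ 6 / (4 * D₀ ^ 2) * (∑ j, A j ^ 2) * (∑ j, A j) *
          Real.sqrt (∑ z, x z ^ 2) ∧
    Real.sqrt (∑ z', ((Wdiag N hbar A E Ez + Woff N hbar A E Ez).mulVec x z') ^ 2) ≤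
        (hbar ^ 4 / (4 * D₀) * (∑ j, A j ^ 2)
          + hbar ^ 6 / (4 * D₀ ^ 2) * (∑ j, A j ^ 2) * (∑ j, A j)) *
          Real.sqrt (∑ z, x z ^ 2) := by
  classical
  set B1 : ℝ := hbar ^ 4 / (4 * D₀) * (∑ j, A j ^ 2) with hB1def
  set B2 : ℝ := hbar ^ 6 / (4 * D₀ ^ 2) * (∑ j, A j ^ 2) * (∑ j, A j) with hB2def
  have hA2n : 0 ≤ ∑ j, A j ^ 2 := Finset.sum_nonneg fun j _ => sq_nonneg _
  have hA1n : 0 ≤ ∑ j, A j := Finset.sum_nonneg fun j _ => hA j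
  have hB1n : 0 ≤ B1 := by positivity
  have hB2n : 0 ≤ B2 := by positivity
  -- diagonal entry bound
  have hdiag : ∀ z' z, |Wdiag N hbar A E Ez z' z| ≤ if z' = z then B1 else 0 := by
    intro z' z
    unfold Wdiag
    split_ifs with h
    · -- |d z| ≤ B1
      have hterm : ∀ j : Fin N,
          |hbar ^ 4 * A j ^ 2 / (4 * (E + Ez z + hbar ^ 2 * A j / 2))| ≤
            hbar ^ 4 * A j ^ 2 / (4 * D₀) := by
        intro j
        have hd := (hden z j).1
        rw [abs_div, abs_of_nonneg (by positivity : (0:ℝ) ≤ hbar ^ 4 * A j ^ 2),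
          abs_mul]
        have h4 : |(4:ℝ)| = 4 := by norm_num
        rw [h4]
        gcongr
      have h1 : |∑ j ∈ Finset.univ.filter (fun j => z j = false),
            hbar ^ 4 * A j ^ 2 / (4 * (E + Ez z + hbar ^ 2 * A j / 2))| ≤
          ∑ j ∈ Finset.univ.filter (fun j => z j = false),
            hbar ^ 4 * A j ^ 2 / (4 * D₀) :=
        le_trans (Finset.abs_sum_le_sum_abs _ _)
          (Finset.sum_le_sum fun j _ => hterm j)
      have h2 : |∑ k ∈ Finset.univ.filter (fun k => z k = true),
            hbar ^ 4 * A k ^ 2 / (4 * (E + Ez z + hbar ^ 2 * A k / 2))| ≤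
          ∑ k ∈ Finset.univ.filter (fun k => z k = true),
            hbar ^ 4 * A k ^ 2 / (4 * D₀) :=
        le_trans (Finset.abs_sum_le_sum_abs _ _)
          (Finset.sum_le_sum fun k _ => hterm k)
      have hsplit : (∑ j ∈ Finset.univ.filter (fun j => z j = false),
            hbar ^ 4 * A j ^ 2 / (4 * D₀))
          + (∑ k ∈ Finset.univ.filter (fun k => z k = true),
            hbar ^ 4 * A k ^ 2 / (4 * D₀))
          = ∑ j, hbar ^ 4 * A j ^ 2 / (4 * D₀) := by
        rw [show (Finset.univ.filter (fun k : Fin N => z k = true))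
            = Finset.univ.filter (fun k : Fin N => ¬ z k = false) by
          apply Finset.filter_congr; intro k _; simp]
        exact Finset.sum_filter_add_sum_filter_not _ _ _
      calc |_ - _| ≤ |∑ j ∈ Finset.univ.filter (fun j => z j = false),
              hbar ^ 4 * A j ^ 2 / (4 * (E + Ez z + hbar ^ 2 * A j / 2))|
            + |∑ k ∈ Finset.univ.filter (fun k => z k = true),
              hbar ^ 4 * A k ^ 2 / (4 * (E + Ez z + hbar ^ 2 * A k / 2))| :=
            abs_sub _ _
        _ ≤ ∑ j, hbar ^ 4 * A j ^ 2 / (4 * D₀) := by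
            rw [← hsplit]; exact add_le_add h1 h2
        _ = B1 := by
            rw [hB1def, Finset.mul_sum]
            exact Finset.sum_congr rfl fun j _ => by ring
    · simp
  -- off-diagonal: per-pair termwise bounds
  set e : Fin N → Fin N → ℝ :=
    fun j k => hbar ^ 6 / (8 * D₀ ^ 2) * (A j * A k * (A j + A k)) with hedef
  have hen : ∀ j k, 0 ≤ e j k := by
    intro j k
    have := hA j; have := hA k
    rw [hedef]; positivity
  have hesum : ∑ j, ∑ k, e j k = B2 := by
    have hin : ∀ j : Fin N, ∑ k, e j k =
        hbar ^ 6 / (8 * D₀ ^ 2) * (A j ^ 2 * (∑ k, A k) + A j * (∑ k, A k ^ 2)) := by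
      intro j
      rw [hedef, ← Finset.mul_sum]
      congr 1
      rw [Finset.mul_sum, Finset.mul_sum, ← Finset.sum_add_distrib]
      exact Finset.sum_congr rfl fun k _ => by ring
    simp_rw [hin]
    rw [← Finset.mul_sum, Finset.sum_add_distrib, ← Finset.sum_mul, ← Finset.sum_mul,
      hB2def]
    ring
  -- bound each (j,k)-term of Woff
  have hterm_off : ∀ (z z' : Fin N → Bool) (j k : Fin N),
      (z j = false ∧ z k = true ∧ j ≠ k ∧
        z' = Function.update (Function.update z j true) k false) →
      |hbar ^ 4 * A j * A k / 4 *
        (1 / (E + Ez z + hbar ^ 2 * A k / 2) - 1 / (E + Ez z + hbar ^ 2 * A j / 2))| ≤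
        e j k := by
    intro z z' j k hc
    exact offentry_bound hbar (A j) (A k) (hA j) (hA k) D₀ _ _ hD₀
      (hden z k).1 (hden z j).1 (by ring)
  -- column sums of Woff
  have hcolW : ∀ z, ∑ z', |Woff N hbar A E Ez z' z| ≤ B2 := by
    intro z
    have step1 : ∀ z', |Woff N hbar A E Ez z' z| ≤
        ∑ j, ∑ k, |if z j = false ∧ z k = true ∧ j ≠ k ∧
            z' = Function.update (Function.update z j true) k false then
          hbar ^ 4 * A j * A k / 4 *
            (1 / (E + Ez z + hbar ^ 2 * A k / 2) - 1 / (E + Ez z + hbar ^ 2 * A j / 2))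
          else 0| := by
      intro z'
      exact le_trans (Finset.abs_sum_le_sum_abs _ _)
        (Finset.sum_le_sum fun j _ => Finset.abs_sum_le_sum_abs _ _)
    calc ∑ z', |Woff N hbar A E Ez z' z| ≤
        ∑ z', ∑ j, ∑ k, |if z j = false ∧ z k = true ∧ j ≠ k ∧
            z' = Function.update (Function.update z j true) k false then
          hbar ^ 4 * A j * A k / 4 *
            (1 / (E + Ez z + hbar ^ 2 * A k / 2) - 1 / (E + Ez z + hbar ^ 2 * A j / 2))
          else 0| := Finset.sum_le_sum fun z' _ => step1 z'
      _ = ∑ j, ∑ k, ∑ z', |if z j = false ∧ z k = true ∧ j ≠ k ∧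
            z' = Function.update (Function.update z j true) k false then
          hbar ^ 4 * A j * A k / 4 *
            (1 / (E + Ez z + hbar ^ 2 * A k / 2) - 1 / (E + Ez z + hbar ^ 2 * A j / 2))
          else 0| := by
          rw [Finset.sum_comm]
          exact Finset.sum_congr rfl fun j _ => Finset.sum_comm
      _ ≤ ∑ j, ∑ k, e j k := by
          apply Finset.sum_le_sum; intro j _
          apply Finset.sum_le_sum; intro k _
          by_cases hP : z j = false ∧ z k = true ∧ j ≠ k
          · have : ∀ z' : Fin N → Bool, |if z j = false ∧ z k = true ∧ j ≠ k ∧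
                z' = Function.update (Function.update z j true) k false then
              hbar ^ 4 * A j * A k / 4 *
                (1 / (E + Ez z + hbar ^ 2 * A k / 2) - 1 / (E + Ez z + hbar ^ 2 * A j / 2))
              else 0| =
              if z' = Function.update (Function.update z j true) k false then
                |hbar ^ 4 * A j * A k / 4 *
                (1 / (E + Ez z + hbar ^ 2 * A k / 2) - 1 / (E + Ez z + hbar ^ 2 * A j / 2))|
              else 0 := by
              intro z'
              simp only [hP.1, hP.2.1, hP.2.2, ne_eq, not_false_eq_true, true_and]
              split_ifs <;> simp
            rw [Finset.sum_congr rfl fun z' _ => this z']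
            rw [Finset.sum_ite_eq' Finset.univ
              (Function.update (Function.update z j true) k false)]
            simp only [Finset.mem_univ, if_true]
            exact hterm_off z _ j k ⟨hP.1, hP.2.1, hP.2.2, rfl⟩
          · have : ∀ z' : Fin N → Bool, |if z j = false ∧ z k = true ∧ j ≠ k ∧
                z' = Function.update (Function.update z j true) k false then
              hbar ^ 4 * A j * A k / 4 *
                (1 / (E + Ez z + hbar ^ 2 * A k / 2) - 1 / (E + Ez z + hbar ^ 2 * A j / 2))
              else 0| = 0 := by
              intro z'
              rw [if_neg (by tauto), abs_zero]
            rw [Finset.sum_congr rfl fun z' _ => this z', Finset.sum_const, smul_zero]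
            exact hen j k
      _ = B2 := hesum
  -- row sums of Woff
  have hrowW : ∀ z', ∑ z, |Woff N hbar A E Ez z' z| ≤ B2 := by
    intro z'
    calc ∑ z, |Woff N hbar A E Ez z' z| ≤
        ∑ z, ∑ j, ∑ k, |if z j = false ∧ z k = true ∧ j ≠ k ∧
            z' = Function.update (Function.update z j true) k false then
          hbar ^ 4 * A j * A k / 4 *
            (1 / (E + Ez z + hbar ^ 2 * A k / 2) - 1 / (E + Ez z + hbar ^ 2 * A j / 2))
          else 0| :=
          Finset.sum_le_sum fun z _ =>
            le_trans (Finset.abs_sum_le_sum_abs _ _)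
              (Finset.sum_le_sum fun j _ => Finset.abs_sum_le_sum_abs _ _)
      _ = ∑ j, ∑ k, ∑ z, |if z j = false ∧ z k = true ∧ j ≠ k ∧
            z' = Function.update (Function.update z j true) k false then
          hbar ^ 4 * A j * A k / 4 *
            (1 / (E + Ez z + hbar ^ 2 * A k / 2) - 1 / (E + Ez z + hbar ^ 2 * A j / 2))
          else 0| := by
          rw [Finset.sum_comm]
          exact Finset.sum_congr rfl fun j _ => Finset.sum_comm
      _ ≤ ∑ j, ∑ k, e j k := by
          apply Finset.sum_le_sum; intro j _
          apply Finset.sum_le_sum; intro k _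
          have hpt : ∀ z : Fin N → Bool, |if z j = false ∧ z k = true ∧ j ≠ k ∧
              z' = Function.update (Function.update z j true) k false then
            hbar ^ 4 * A j * A k / 4 *
              (1 / (E + Ez z + hbar ^ 2 * A k / 2) - 1 / (E + Ez z + hbar ^ 2 * A j / 2))
            else 0| ≤
            if z = Function.update (Function.update z' j false) k true then e j k
            else 0 := by
            intro z
            by_cases hc : z j = false ∧ z k = true ∧ j ≠ k ∧
                z' = Function.update (Function.update z j true) k false
            · rw [if_pos hc,
                if_pos (flipflop_uniq N z' z j k hc.1 hc.2.1 hc.2.2.1 hc.2.2.2)]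
              exact hterm_off z z' j k hc
            · rw [if_neg hc, abs_zero]
              split_ifs
              · exact hen j k
              · exact le_refl 0
          calc (∑ z, |if z j = false ∧ z k = true ∧ j ≠ k ∧
                z' = Function.update (Function.update z j true) k false then
              hbar ^ 4 * A j * A k / 4 *
                (1 / (E + Ez z + hbar ^ 2 * A k / 2) - 1 / (E + Ez z + hbar ^ 2 * A j / 2))
              else 0|) ≤
              ∑ z : Fin N → Bool,
                if z = Function.update (Function.update z' j false) k true then e j k
                else 0 := Finset.sum_le_sum fun z _ => hpt z
            _ = e j k := by
                rw [Finset.sum_ite_eq' Finset.univ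
                  (Function.update (Function.update z' j false) k true)]
                simp
      _ = B2 := hesum
  -- row/col sums of Wdiag
  have hrowD : ∀ z', ∑ z, |Wdiag N hbar A E Ez z' z| ≤ B1 := by
    intro z'
    calc ∑ z, |Wdiag N hbar A E Ez z' z| ≤ ∑ z : Fin N → Bool, if z' = z then B1 else 0 :=
        Finset.sum_le_sum fun z _ => hdiag z' z
      _ = B1 := by rw [Finset.sum_ite_eq Finset.univ z']; simp
  have hcolD : ∀ z, ∑ z', |Wdiag N hbar A E Ez z' z| ≤ B1 := by
    intro z
    calc ∑ z', |Wdiag N hbar A E Ez z' z| ≤ ∑ z' : Fin N → Bool, if z' = z then B1 else 0 :=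
        Finset.sum_le_sum fun z' _ => hdiag z' z
      _ = B1 := by rw [Finset.sum_ite_eq' Finset.univ z]; simp
  refine ⟨schur_bound _ B1 hB1n hrowD hcolD x,
    schur_bound _ B2 hB2n hrowW hcolW x,
    schur_bound _ (B1 + B2) (by linarith) ?_ ?_ x⟩
  · intro z'
    calc ∑ z, |(Wdiag N hbar A E Ez + Woff N hbar A E Ez) z' z| ≤
        ∑ z, (|Wdiag N hbar A E Ez z' z| + |Woff N hbar A E Ez z' z|) :=
        Finset.sum_le_sum fun z _ => by
          rw [Matrix.add_apply]; exact abs_add_le _ _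
      _ = (∑ z, |Wdiag N hbar A E Ez z' z|) + ∑ z, |Woff N hbar A E Ez z' z| :=
        Finset.sum_add_distrib
      _ ≤ B1 + B2 := add_le_add (hrowD z') (hrowW z')
  · intro z
    calc ∑ z', |(Wdiag N hbar A E Ez + Woff N hbar A E Ez) z' z| ≤
        ∑ z', (|Wdiag N hbar A E Ez z' z| + |Woff N hbar A E Ez z' z|) :=
        Finset.sum_le_sum fun z' _ => by
          rw [Matrix.add_apply]; exact abs_add_le _ _
      _ = (∑ z', |Wdiag N hbar A E Ez z' z|) + ∑ z', |Woff N hbar A E Ez z' z| :=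
        Finset.sum_add_distrib
      _ ≤ B1 + B2 := add_le_add (hcolD z) (hcolW z)
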